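/- Let p = (p_1,...,p_t) be a sequence of positive integers summing to m. Then the polynomial F_p satisfies F_p(-n) = (-1)^{m+t} \sum_{q} F_q(n+1), where the sum ranges over all compositions q of m that coarsen p (i.e., p refines q as compositions of m). -/

import Mathlib

/-- `Fsum p n = ∑_{0 ≤ k₁ < ⋯ < k_t ≤ n-1} k₁^{p₁} ⋯ k_t^{p_t}`, where `t = p.length`. -/
def Fsum (p : List ℕ) (n : ℕ) : ℚ :=
  ∑ k ∈ Finset.univ.filter (fun k : Fin p.length → Fin n => ∀ i j, i < j → k i < k j),
    ∏ i, ((k i : ℕ) : ℚ) ^ p.get i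

/-- `c` is a composition of the integer `m`: a list of positive integers summing to `m`. -/
def IsIntComp (m : ℕ) (c : List ℕ) : Prop := (∀ x ∈ c, 0 < x) ∧ c.sum = m

/-- `c` refines the composition `a`: `c` is a concatenation of compositions of the parts
of `a`, in order. -/
def RefinesInt (c a : List ℕ) : Prop :=
  ∃ cs : List (List ℕ), List.Forall₂ (fun ci ai => IsIntComp ai ci) cs a ∧ c = cs.flatten

/-! Splitting off the largest index gives `F_{p++[x]}(N) = ∑_{k<N} k^x F_p(k)`, so the polynomials
satisfy `F_{p++[x]}(z+1) = F_{p++[x]}(z) + z^x F_p(z)`, an identity that can be run backwards from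
`z = 0` into the negative integers. On the other side, `G_p(N) := ∑_{q coarsening p} F_q(N)`
is the sum over weakly increasing chains `k₁ ≤ ⋯ ≤ k_t < N`: a coarsening of `p ++ [x]` either
ends in a new part `x` or has `x` merged into its last part, whence
`G_{p++[x]}(N) = ∑_{k<N} k^x G_p(k+1)`.
The two recursions match up to the sign `(-1)^(x+1)` per part, and induction on `p` and then on
`n` gives `F_p(-n) = (-1)^(m+t) G_p(n+1)`. -/

open Finset Polynomial

theorem sum_prod_strictMono_succ {R : Type*} [CommSemiring R] (t N : ℕ) (g : ℕ → ℕ → R) :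
    ∑ σ ∈ univ.filter (fun σ : Fin (t + 1) → Fin N => ∀ i j, i < j → σ i < σ j),
        ∏ i : Fin (t + 1), g i (σ i) =
      ∑ v ∈ range N, g t v *
        ∑ τ ∈ univ.filter (fun τ : Fin t → Fin v => ∀ i j, i < j → τ i < τ j),
          ∏ i : Fin t, g i (τ i) := by
  rw [← Fin.sum_univ_eq_sum_range, ← sum_fiberwise_of_maps_to (g := fun σ => σ (Fin.last t))
    (fun _ _ => mem_univ _)]
  refine sum_congr rfl fun v _ => ?_
  rw [mul_sum, filter_filter]
  refine sum_bij'
    (fun σ hσ i => ⟨σ i.castSucc, by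
      obtain ⟨hmono, rfl⟩ := (mem_filter.1 hσ).2
      exact hmono _ _ i.castSucc_lt_last⟩)
    (fun τ _ => Fin.snoc (α := fun _ => Fin N) (fun i => Fin.castLE v.isLt.le (τ i)) v)
    (fun σ hσ => ?_) (fun τ hτ => ?_) (fun σ hσ => ?_) (fun τ _ => ?_) (fun σ hσ => ?_)
  · simp only [mem_filter, mem_univ, true_and] at hσ ⊢
    exact fun i j hij => hσ.1 _ _ (Fin.castSucc_lt_castSucc_iff.2 hij)
  · simp only [mem_filter, mem_univ, true_and, Fin.snoc_last, and_true] at hτ ⊢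
    intro i j hij
    induction j using Fin.lastCases with
    | last =>
      obtain ⟨i, rfl⟩ := Fin.exists_castSucc_eq.2 (Fin.ne_last_of_lt hij)
      simp [Fin.lt_def]
    | cast j =>
      obtain ⟨i, rfl⟩ :=
        Fin.exists_castSucc_eq.2 (Fin.ne_last_of_lt (hij.trans j.castSucc_lt_last))
      simp only [Fin.snoc_castSucc]
      exact hτ i j (Fin.castSucc_lt_castSucc_iff.1 hij)
  · obtain ⟨-, rfl⟩ := (mem_filter.1 hσ).2
    funext j
    induction j using Fin.lastCases with
    | last => exact Fin.snoc_last (α := fun _ => Fin N) _ _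
    | cast j => ext; simp
  · ext i
    simp
  · obtain ⟨-, rfl⟩ := (mem_filter.1 hσ).2
    simp [Fin.prod_univ_castSucc, mul_comm]

theorem fsum_eq_sum_prod (p : List ℕ) (N : ℕ) :
    Fsum p N = ∑ σ ∈ univ.filter (fun σ : Fin p.length → Fin N => ∀ i j, i < j → σ i < σ j),
      ∏ i : Fin p.length, ((σ i : ℕ) : ℚ) ^ p.getD i 0 := by
  refine sum_congr rfl fun σ _ => prod_congr rfl fun i _ => ?_
  rw [List.getD_eq_getElem _ _ i.isLt, List.get_eq_getElem]

@[simp]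
theorem fsum_nil (N : ℕ) : Fsum [] N = 1 := by
  simp [Fsum]

theorem fsum_append_singleton (ps : List ℕ) (x N : ℕ) :
    Fsum (ps ++ [x]) N = ∑ k ∈ range N, (k : ℚ) ^ x * Fsum ps k := by
  rw [fsum_eq_sum_prod, List.length_append, List.length_singleton,
    sum_prod_strictMono_succ (g := fun i v => (v : ℚ) ^ (ps ++ [x]).getD i 0)]
  refine sum_congr rfl fun k _ => ?_
  rw [List.getD_append_right _ _ _ _ le_rfl, Nat.sub_self, fsum_eq_sum_prod]
  congr 1
  refine sum_congr rfl fun σ _ => prod_congr rfl fun i _ => ?_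
  rw [List.getD_append _ _ _ _ i.isLt]

theorem Polynomial.eq_of_eval_natCast_eq {R : Type*} [CommRing R] [IsDomain R] [CharZero R]
    {P Q : R[X]} (h : ∀ n : ℕ, P.eval (n : R) = Q.eval (n : R)) : P = Q :=
  eq_of_infinite_eval_eq P Q <| (Set.infinite_range_of_injective Nat.cast_injective).mono <| by
    rintro _ ⟨n, rfl⟩
    exact h n

theorem exists_eval_eq_sum_range (g : ℚ[X]) :
    ∃ G : ℚ[X], ∀ n : ℕ, G.eval (n : ℚ) = ∑ k ∈ range n, g.eval (k : ℚ) := by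
  induction g using Polynomial.induction_on' with
  | add f g hf hg =>
    obtain ⟨F, hF⟩ := hf
    obtain ⟨G, hG⟩ := hg
    exact ⟨F + G, fun n => by simp [hF, hG, sum_add_distrib]⟩
  | monomial e a =>
    refine ⟨C (a / (e + 1)) * (Polynomial.bernoulli (e + 1) - C (_root_.bernoulli (e + 1))),
      fun n => ?_⟩
    have faulhaber := sum_range_pow_eq_bernoulli_sub n e
    simp only [eval_mul, eval_C, eval_sub, eval_monomial, ← mul_sum, ← Nat.succ_eq_add_one,
      ← faulhaber]
    field_simp

theorem exists_eval_eq_fsum (p : List ℕ) :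
    ∃ Q : ℚ[X], ∀ n : ℕ, Q.eval (n : ℚ) = Fsum p n := by
  induction p using List.reverseRecOn with
  | nil => exact ⟨1, by simp⟩
  | append_singleton ps x ih =>
    obtain ⟨Q, hQ⟩ := ih
    obtain ⟨G, hG⟩ := exists_eval_eq_sum_range (X ^ x * Q)
    exact ⟨G, fun n => by simp [hG, hQ, fsum_append_singleton]⟩

def coarsenings (p : List ℕ) : Set (List ℕ) :=
  {q | ∃ cs : List (List ℕ), [] ∉ cs ∧ cs.flatten = p ∧ cs.map List.sum = q}

theorem coarsenings_nil : coarsenings [] = {[]} := by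
  ext q
  refine ⟨fun ⟨cs, hnil, hflat, hq⟩ => ?_,
    fun hq => ⟨[], by simp, rfl, (Set.mem_singleton_iff.1 hq).symm⟩⟩
  have : cs = [] := List.eq_nil_iff_forall_not_mem.2 fun c hc =>
    hnil (List.flatten_eq_nil_iff.1 hflat c hc ▸ hc)
  simp [← hq, this]

theorem pos_of_mem_coarsenings {p q : List ℕ} (hp : ∀ y ∈ p, 0 < y)
    (hq : q ∈ coarsenings p) : ∀ y ∈ q, 0 < y := by
  obtain ⟨cs, hnil, rfl, rfl⟩ := hq
  simp only [List.mem_map]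
  rintro _ ⟨c, hc, rfl⟩
  exact List.sum_pos c (fun y hy => hp y (List.mem_flatten.2 ⟨c, hc, hy⟩))
    (ne_of_mem_of_not_mem hc hnil)

theorem append_singleton_mem_coarsenings {ps r : List ℕ} (x : ℕ) (hr : r ∈ coarsenings ps) :
    r ++ [x] ∈ coarsenings (ps ++ [x]) := by
  obtain ⟨cs, hnil, rfl, rfl⟩ := hr
  exact ⟨cs ++ [[x]], by simpa using hnil, by simp, by simp⟩

theorem modifyLast_add_mem_coarsenings {ps r : List ℕ} (x : ℕ) (hr : r ∈ coarsenings ps)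
    (hr₀ : r ≠ []) : r.modifyLast (· + x) ∈ coarsenings (ps ++ [x]) := by
  obtain ⟨cs, hnil, rfl, rfl⟩ := hr
  obtain rfl | ⟨cs, c, rfl⟩ := cs.eq_nil_or_concat'
  · simp at hr₀
  refine ⟨cs ++ [c ++ [x]], by simp_all, by simp, ?_⟩
  simp [List.modifyLast_concat]

theorem mem_coarsenings_append_singleton {ps q : List ℕ} {x : ℕ}
    (hq : q ∈ coarsenings (ps ++ [x])) :
    (∃ r ∈ coarsenings ps, q = r ++ [x]) ∨
      ∃ r ∈ coarsenings ps, r ≠ [] ∧ q = r.modifyLast (· + x) := by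
  obtain ⟨cs, hnil, hflat, rfl⟩ := hq
  obtain rfl | ⟨cs, c, rfl⟩ := cs.eq_nil_or_concat'
  · simp at hflat
  obtain rfl | ⟨c, a, rfl⟩ := c.eq_nil_or_concat'
  · simp at hnil
  have hcs : [] ∉ cs := fun h => hnil (List.mem_append_left _ h)
  rw [List.flatten_concat, ← List.append_assoc] at hflat
  obtain ⟨hps, ha⟩ := List.append_inj' hflat rfl
  obtain rfl : a = x := by simpa using ha
  by_cases hc : c = []
  · subst hc
    exact Or.inl ⟨_, ⟨cs, hcs, by simpa using hps, rfl⟩, by simp⟩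
  · refine Or.inr
      ⟨(cs ++ [c]).map List.sum, ⟨cs ++ [c], ?_, by simpa using hps, rfl⟩, by simp, ?_⟩
    · simp [hcs, Ne.symm hc]
    · simp [List.modifyLast_concat]

theorem coarsenings_append_singleton (ps : List ℕ) (x : ℕ) :
    coarsenings (ps ++ [x]) =
      (· ++ [x]) '' coarsenings ps ∪ List.modifyLast (· + x) '' (coarsenings ps \ {[]}) := by
  ext q
  refine ⟨fun hq => ?_, ?_⟩
  · rcases mem_coarsenings_append_singleton hq with ⟨r, hr, rfl⟩ | ⟨r, hr, hr₀, rfl⟩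
    · exact Or.inl ⟨r, hr, rfl⟩
    · exact Or.inr ⟨r, ⟨hr, hr₀⟩, rfl⟩
  · rintro (⟨r, hr, rfl⟩ | ⟨r, ⟨hr, hr₀⟩, rfl⟩)
    · exact append_singleton_mem_coarsenings x hr
    · exact modifyLast_add_mem_coarsenings x hr hr₀

theorem coarsenings_finite (p : List ℕ) : (coarsenings p).Finite := by
  induction p using List.reverseRecOn with
  | nil => simp [coarsenings_nil]
  | append_singleton ps x ih =>
    rw [coarsenings_append_singleton]
    exact (ih.image _).union (ih.sdiff.image _)

theorem isIntComp_and_refinesInt_iff_mem_coarsenings {p : List ℕ} (hp : ∀ y ∈ p, 0 < y)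
    (q : List ℕ) :
    IsIntComp p.sum q ∧ RefinesInt p q ↔ q ∈ coarsenings p := by
  constructor
  · rintro ⟨⟨hq, -⟩, cs, hcs, rfl⟩
    have hsum : cs.map List.sum = q := by
      rw [← List.forall₂_eq_eq_eq, List.forall₂_map_left_iff]
      exact hcs.imp fun _ _ h => h.2
    refine ⟨cs, fun hnil => ?_, rfl, hsum⟩
    simpa using hq 0 (hsum ▸ List.mem_map_of_mem hnil)
  · intro hq
    obtain ⟨cs, -, rfl, rfl⟩ := id hq
    refine ⟨⟨pos_of_mem_coarsenings hp hq, List.sum_flatten.symm⟩, cs, ?_, rfl⟩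
    rw [List.forall₂_map_right_iff, List.forall₂_same]
    exact fun c hc => ⟨fun y hy => hp y (List.mem_flatten.2 ⟨c, hc, hy⟩), rfl⟩

theorem fsum_modifyLast_add {s : List ℕ} (hs : s ≠ []) (x N : ℕ) :
    Fsum (s.modifyLast (· + x)) N =
      ∑ k ∈ range N, (k : ℚ) ^ x * (Fsum s (k + 1) - Fsum s k) := by
  obtain ⟨r, a, rfl⟩ := (s.eq_nil_or_concat').resolve_left hs
  rw [List.modifyLast_concat, fsum_append_singleton]
  refine sum_congr rfl fun k _ => ?_
  rw [fsum_append_singleton, fsum_append_singleton, sum_range_succ, pow_add]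
  ring

noncomputable def coarseningSum (p : List ℕ) (N : ℕ) : ℚ :=
  ∑ q ∈ (coarsenings_finite p).toFinset, Fsum q N

theorem coarseningSum_nil (N : ℕ) : coarseningSum [] N = 1 := by
  simp [coarseningSum, coarsenings_nil]

theorem coarseningSum_append_singleton {ps : List ℕ} (hps : ∀ y ∈ ps, 0 < y) (x N : ℕ) :
    coarseningSum (ps ++ [x]) N = ∑ k ∈ range N, (k : ℚ) ^ x * coarseningSum ps (k + 1) := by
  classical
  set S := (coarsenings_finite ps).toFinset
  have hsplit : (coarsenings_finite (ps ++ [x])).toFinset =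
      S.image (· ++ [x]) ∪ (S.filter (· ≠ [])).image (List.modifyLast (· + x)) := by
    ext q
    simp [S, coarsenings_append_singleton]
  have hdisj :
      Disjoint (S.image (· ++ [x])) ((S.filter (· ≠ [])).image (List.modifyLast (· + x))) := by
    simp only [disjoint_left, mem_image, mem_filter, not_exists, not_and]
    rintro _ ⟨r, -, rfl⟩ s ⟨hs, hs₀⟩ hrs
    obtain ⟨s, a, rfl⟩ := s.eq_nil_or_concat'.resolve_left hs₀
    have ha : 0 < a := pos_of_mem_coarsenings hps ((Set.Finite.mem_toFinset _).1 hs) a (by simp)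
    rw [List.modifyLast_concat] at hrs
    simpa [ha.ne'] using (List.append_inj' hrs rfl).2
  have hinj : Set.InjOn (List.modifyLast (· + x)) (S.filter (· ≠ [])) := by
    intro s hs t ht hst
    obtain ⟨s, a, rfl⟩ := s.eq_nil_or_concat'.resolve_left (mem_filter.1 hs).2
    obtain ⟨t, b, rfl⟩ := t.eq_nil_or_concat'.resolve_left (mem_filter.1 ht).2
    rw [List.modifyLast_concat, List.modifyLast_concat] at hst
    obtain ⟨rfl, hab⟩ := List.append_inj' hst rfl
    simp_all
  calc coarseningSum (ps ++ [x]) N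
      = ∑ r ∈ S, Fsum (r ++ [x]) N +
          ∑ r ∈ S with r ≠ [], Fsum (r.modifyLast (· + x)) N := by
        rw [coarseningSum, hsplit, sum_union hdisj,
          sum_image fun _ _ _ _ h => List.append_cancel_right h, sum_image hinj]
    _ = ∑ r ∈ S, Fsum (r ++ [x]) N +
          ∑ r ∈ S, ∑ k ∈ range N, (k : ℚ) ^ x * (Fsum r (k + 1) - Fsum r k) := by
        refine congrArg _ ((sum_congr rfl fun r hr =>
          fsum_modifyLast_add (mem_filter.1 hr).2 x N).trans (sum_filter_of_ne ?_))
        rintro r - hr rfl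
        simp at hr
    _ = ∑ r ∈ S, ∑ k ∈ range N, (k : ℚ) ^ x * Fsum r (k + 1) := by
        rw [← sum_add_distrib]
        refine sum_congr rfl fun r _ => ?_
        rw [fsum_append_singleton, ← sum_add_distrib]
        exact sum_congr rfl fun k _ => by ring
    _ = _ := by
        rw [sum_comm]
        simp only [coarseningSum, mul_sum]
        rfl

theorem eval_neg_eq_coarseningSum {p : List ℕ} (hp : ∀ y ∈ p, 0 < y) {Q : ℚ[X]}
    (hQ : ∀ n : ℕ, Q.eval (n : ℚ) = Fsum p n) (n : ℕ) :
    Q.eval (-(n : ℚ)) = (-1) ^ (p.sum + p.length) * coarseningSum p (n + 1) := by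
  induction p using List.reverseRecOn generalizing Q n with
  | nil =>
    obtain rfl : Q = C 1 := eq_of_eval_natCast_eq fun n => by simp [hQ]
    simp [coarseningSum_nil]
  | append_singleton ps x ih =>
    have hps : ∀ y ∈ ps, 0 < y := fun y hy => hp y (List.mem_append_left _ hy)
    have hx : x ≠ 0 := (hp x (by simp)).ne'
    obtain ⟨Q', hQ'⟩ := exists_eval_eq_fsum ps
    have hshift : ∀ z, Q.eval (z + 1) = Q.eval z + z ^ x * Q'.eval z := by
      have : Q.comp (X + 1) = Q + X ^ x * Q' := eq_of_eval_natCast_eq fun N => by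
        simp only [eval_comp, eval_add, eval_X, eval_one, eval_mul, eval_pow, hQ',
          ← Nat.cast_succ, hQ, fsum_append_singleton, sum_range_succ]
      exact fun z => by simpa using congrArg (eval z) this
    have hsign : (-1 : ℚ) ^ ((ps ++ [x]).sum + (ps ++ [x]).length) =
        -(-1) ^ x * (-1) ^ (ps.sum + ps.length) := by
      simp only [List.sum_append, List.length_append, List.sum_singleton, List.length_singleton]
      ring
    induction n with
    | zero =>
      have hQ0 : Q.eval 0 = 0 := by simpa [fsum_append_singleton] using hQ 0
      simp [hQ0, coarseningSum_append_singleton hps, hx]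
    | succ n ihn =>
      have hQ'neg := ih hps hQ' (n + 1)
      have hstep := hshift (-((n : ℚ) + 1))
      rw [show -((n : ℚ) + 1) + 1 = -n by ring, ihn, hsign, neg_pow ((n : ℚ) + 1)] at hstep
      rw [coarseningSum_append_singleton hps, sum_range_succ,
        ← coarseningSum_append_singleton hps, hsign]
      push_cast at hQ'neg ⊢
      rw [hQ'neg] at hstep
      linear_combination -hstep

/-- Reciprocity: `F_p(-n) = (-1)^(m+t) ∑_{q ⪰ p} F_q(n+1)`, the sum over compositions `q`
of `m` coarsened by `p`. -/
theorem stmt_6 (p : List ℕ) (hp : ∀ x ∈ p, 0 < x) (m : ℕ) (hm : p.sum = m)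
    (Q : Polynomial ℚ) (hQ : ∀ n : ℕ, Q.eval (n : ℚ) = Fsum p n) (n : ℕ) :
    Q.eval (-(n : ℚ)) =
      (-1) ^ (m + p.length) *
        ∑ᶠ (q : List ℕ) (_ : IsIntComp m q ∧ RefinesInt p q), Fsum q (n + 1) := by
  subst hm
  simp only [isIntComp_and_refinesInt_iff_mem_coarsenings hp,
    finsum_mem_eq_finite_toFinset_sum _ (coarsenings_finite p)]
  exact eval_neg_eq_coarseningSum hp hQ n
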